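/- arXiv:2505.20064 — 3 statements merged into one kernel-verified Lean document; each statement's English description precedes it below -/
import Mathlib

section
/- Let Φ be a Hermitian-preserving superoperator satisfying KMS detailed balance with respect to Gibbs state γ, i.e. Φ = J_γ ∘ Φ† ∘ J_γ^{-1} where J_γ[X] = √γ X √γ. If Φ[X] = Σ c^{ω,ω̃}_{kl} A_l(ω) X A_k(ω̃)† is its frequency decomposition, then the coefficients satisfy c^{ω,ω̃}_{kl} = conj(c^{-ω,-ω̃}_{kl}) · e^{-β(ω+ω̃)/2}. -/
open Matrix
open scoped ComplexOrder

/-!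
Conjugating the dual expansion `Φ†[X] = Σ conj(c) A_l(ω)ᴴ X A_k(ω̃)` by `J_γ` maps
`A_l(ω)ᴴ = A_l(-ω)` to `e^{βω/2} A_l(-ω)` on the left and `A_k(ω̃) = A_k(-ω̃)ᴴ` to
`e^{βω̃/2} A_k(-ω̃)ᴴ` on the right, so `J_γ ∘ Φ† ∘ J_γ⁻¹` is again a frequency expansion, with
coefficients `conj(c^{-ω,-ω̃}) e^{-β(ω+ω̃)/2}` after reindexing `ω ↦ -ω`. KMS detailed balance
identifies it with `Φ`, and linear independence of the sandwiches `X ↦ A_l(ω) X A_k(ω̃)ᴴ`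
makes the coefficients unique.
-/

open Finset

section FrequencyExpansion

variable {R n ι Ω : Type*} [CommRing R] [Star R] [Fintype n] [Fintype ι] [Fintype Ω]

def frequencyExpansion (A : ι → Ω → Matrix n n R) (c : ι → ι → Ω → Ω → R)
    (X : Matrix n n R) : Matrix n n R :=
  ∑ k, ∑ l, ∑ w, ∑ w', c k l w w' • (A l w * X * (A k w')ᴴ)

theorem frequencyExpansion_sub (A : ι → Ω → Matrix n n R) (c c' : ι → ι → Ω → Ω → R)
    (X : Matrix n n R) :
    frequencyExpansion A (c - c') X = frequencyExpansion A c X - frequencyExpansion A c' X := by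
  simp only [frequencyExpansion, Pi.sub_apply, sub_smul, sum_sub_distrib]

theorem coeff_eq_of_frequencyExpansion_eq {A : ι → Ω → Matrix n n R}
    (hindep : ∀ c' : ι → ι → Ω → Ω → R,
      (∀ X, frequencyExpansion A c' X = 0) → ∀ k l w w', c' k l w w' = 0)
    {c c' : ι → ι → Ω → Ω → R} (h : ∀ X, frequencyExpansion A c X = frequencyExpansion A c' X) :
    ∀ k l w w', c k l w w' = c' k l w w' := by
  intro k l w w'
  refine sub_eq_zero.mp (hindep (c - c') (fun X => ?_) k l w w')
  rw [frequencyExpansion_sub, h, sub_self]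

end FrequencyExpansion

section Conjugation

variable {R n ι Ω : Type*} [CommRing R] [Fintype n] [DecidableEq n]

theorem inv_mul_mul_eq_smul_of_mul_mul_inv_eq_smul {S M : Matrix n n R} (hS : IsUnit S.det)
    {a b : R} (h : S * M * S⁻¹ = a • M) (hba : b * a = 1) :
    S⁻¹ * M * S = b • M :=
  calc S⁻¹ * M * S = (b * a) • (S⁻¹ * M * S) := by rw [hba, one_smul]
    _ = b • (S⁻¹ * (S * M * S⁻¹) * S) := by
        rw [h, mul_smul, Matrix.mul_smul, Matrix.smul_mul]
    _ = b • M := by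
        simp only [← mul_assoc, nonsing_inv_mul _ hS, one_mul]
        rw [mul_assoc, nonsing_inv_mul _ hS, mul_one]

theorem conj_adjointExpansion_eq_frequencyExpansion [Star R] [Fintype ι] [Fintype Ω]
    {S : Matrix n n R} (hS : IsUnit S.det)
    {A : ι → Ω → Matrix n n R} {μ : Ω → R} {neg : Ω → Ω} (hneg : Function.Involutive neg)
    (heig : ∀ k w, S * A k w * S⁻¹ = μ w • A k w) (hμ : ∀ w, μ (neg w) * μ w = 1)
    (hconj : ∀ k w, (A k w)ᴴ = A k (neg w)) (b : ι → ι → Ω → Ω → R) (X : Matrix n n R) :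
    S * (∑ k, ∑ l, ∑ w, ∑ w', b k l w w' • ((A l w)ᴴ * (S⁻¹ * X * S⁻¹) * A k w')) * S
      = frequencyExpansion A (fun k l w w' => b k l (neg w) (neg w') * (μ w * μ w')) X := by
  have hleft : ∀ l w, S * (A l w)ᴴ * S⁻¹ = μ (neg w) • A l (neg w) := fun l w => by
    rw [hconj, heig]
  have hright : ∀ k w', S⁻¹ * A k w' * S = μ (neg w') • (A k (neg w'))ᴴ := fun k w' => by
    rw [hconj, hneg]
    exact inv_mul_mul_eq_smul_of_mul_mul_inv_eq_smul hS (heig k w') (hμ w')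
  have hterm : ∀ k l w w', S * (b k l w w' • ((A l w)ᴴ * (S⁻¹ * X * S⁻¹) * A k w')) * S
      = (b k l w w' * (μ (neg w) * μ (neg w'))) • (A l (neg w) * X * (A k (neg w'))ᴴ) := by
    intro k l w w'
    calc _ = b k l w w' • ((S * (A l w)ᴴ * S⁻¹) * X * (S⁻¹ * A k w' * S)) := by
          simp only [Matrix.mul_smul, Matrix.smul_mul, mul_assoc]
      _ = _ := by
          rw [hleft, hright]
          simp only [Matrix.smul_mul, Matrix.mul_smul, smul_smul, mul_comm, mul_left_comm]
  let e := hneg.toPerm neg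
  simp only [mul_sum, sum_mul, hterm, frequencyExpansion]
  refine Fintype.sum_congr _ _ fun k => Fintype.sum_congr _ _ fun l => ?_
  rw [← Equiv.sum_comp e]
  refine Fintype.sum_congr _ _ fun w => ?_
  rw [← Equiv.sum_comp e]
  refine Fintype.sum_congr _ _ fun w' => ?_
  simp only [e, Function.Involutive.coe_toPerm, hneg w, hneg w']

end Conjugation

theorem kms_detailed_balance_coefficient_characterization_general {d : ℕ} {ι ΩT : Type*}
    [Fintype ι] [Fintype ΩT]
    (β : ℝ)
    (γsq : Matrix (Fin d) (Fin d) ℂ) (hγsq : γsq.PosDef)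
    (freq : ΩT → ℝ) (hfreq : Function.Injective freq)
    (neg : ΩT → ΩT) (hneg : ∀ w, freq (neg w) = -freq w)
    (A : ι → ΩT → Matrix (Fin d) (Fin d) ℂ)
    (heig : ∀ k w, γsq * A k w * γsq⁻¹ = Complex.exp (-(β * freq w) / 2) • A k w)
    (hconjA : ∀ k w, (A k w)ᴴ = A k (neg w))
    (hindep : ∀ c' : ι → ι → ΩT → ΩT → ℂ,
      (∀ X : Matrix (Fin d) (Fin d) ℂ,
        ∑ k, ∑ l, ∑ w, ∑ w', c' k l w w' • (A l w * X * (A k w')ᴴ) = 0) →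
      ∀ k l w w', c' k l w w' = 0)
    (c : ι → ι → ΩT → ΩT → ℂ)
    (Φ Φadj : Matrix (Fin d) (Fin d) ℂ →ₗ[ℂ] Matrix (Fin d) (Fin d) ℂ)
    (hrep : ∀ X : Matrix (Fin d) (Fin d) ℂ,
      Φ X = ∑ k, ∑ l, ∑ w, ∑ w', c k l w w' • (A l w * X * (A k w')ᴴ))
    (hadjrep : ∀ X : Matrix (Fin d) (Fin d) ℂ,
      Φadj X = ∑ k, ∑ l, ∑ w, ∑ w', star (c k l w w') • ((A l w)ᴴ * X * A k w'))
    (hKMS : ∀ X : Matrix (Fin d) (Fin d) ℂ,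
      Φ X = γsq * Φadj (γsq⁻¹ * X * γsq⁻¹) * γsq) :
    ∀ k l w w', c k l w w'
      = star (c k l (neg w) (neg w')) * Complex.exp (-(β * (freq w + freq w')) / 2) := by
  have hS : IsUnit γsq.det := (isUnit_iff_isUnit_det _).mp hγsq.isUnit
  have hneg_involutive : Function.Involutive neg := fun w => hfreq (by rw [hneg, hneg, neg_neg])
  have hμ : ∀ w, Complex.exp (-(β * freq (neg w)) / 2) * Complex.exp (-(β * freq w) / 2) = 1 :=
    fun w => by rw [← Complex.exp_add, hneg, ← Complex.exp_zero]; push_cast; ring_nf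
  have hcoeff : ∀ k l w w', c k l w w' = star (c k l (neg w) (neg w')) *
      (Complex.exp (-(β * freq w) / 2) * Complex.exp (-(β * freq w') / 2)) :=
    coeff_eq_of_frequencyExpansion_eq hindep fun X => by
      rw [← conj_adjointExpansion_eq_frequencyExpansion hS hneg_involutive heig hμ hconjA
        (fun k l w w' => star (c k l w w')), ← hadjrep, ← hKMS, hrep, frequencyExpansion]
  intro k l w w'
  rw [hcoeff, ← Complex.exp_add]
  congr 2
  ring

/-- **Structural characterization of KMS detailed balanced superoperators.**
Let `γ = γsq * γsq` be a positive definite Gibbs state of the Hermitian matrix `H` at inverse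
temperature `β`, with positive definite square root `γsq`.  Let `A k w` be frequency
components: eigenoperators of `Δ_γ^{1/2}` with `γsq * A k w * γsq⁻¹ = exp(-β ω_w/2) • A k w`,
closed under adjoints via `(A k w)ᴴ = A k (neg w)` where `freq (neg w) = - freq w`, and
linearly independent as sandwich maps.  If `Φ[X] = Σ c^{w,w'}_{kl} A_l(w) X A_k(w')ᴴ` is
Hermitian-preserving, its Hilbert–Schmidt adjoint has the dual expansion
`Φ†[X] = Σ conj(c^{w,w'}_{kl}) A_l(w)ᴴ X A_k(w')`, and `Φ` satisfies KMS detailed balance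
`Φ = J_γ ∘ Φ† ∘ J_γ⁻¹` with `J_γ[X] = √γ X √γ`, then the coefficients satisfy
`c^{w,w'}_{kl} = conj(c^{-w,-w'}_{kl}) · e^{-β(ω_w+ω_{w'})/2}`. -/
theorem kms_detailed_balance_coefficient_characterization {d : ℕ} {ι ΩT : Type*}
    [Fintype ι] [Fintype ΩT]
    (β : ℝ) (H : Matrix (Fin d) (Fin d) ℂ) (hH : H.IsHermitian)
    (γ γsq : Matrix (Fin d) (Fin d) ℂ) (hγ : γ.PosDef) (hγsq : γsq.PosDef)
    (hsq : γsq * γsq = γ)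
    (hγdef : γ = ((NormedSpace.exp ((-β : ℂ) • H)).trace)⁻¹ • NormedSpace.exp ((-β : ℂ) • H))
    (freq : ΩT → ℝ) (hfreq : Function.Injective freq)
    (neg : ΩT → ΩT) (hneg : ∀ w, freq (neg w) = -freq w)
    (A : ι → ΩT → Matrix (Fin d) (Fin d) ℂ)
    (heig : ∀ k w, γsq * A k w * γsq⁻¹ = Complex.exp (-(β * freq w) / 2) • A k w)
    (hconjA : ∀ k w, (A k w)ᴴ = A k (neg w))
    (hindep : ∀ c' : ι → ι → ΩT → ΩT → ℂ,
      (∀ X : Matrix (Fin d) (Fin d) ℂ,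
        ∑ k, ∑ l, ∑ w, ∑ w', c' k l w w' • (A l w * X * (A k w')ᴴ) = 0) →
      ∀ k l w w', c' k l w w' = 0)
    (c : ι → ι → ΩT → ΩT → ℂ)
    (Φ Φadj : Matrix (Fin d) (Fin d) ℂ →ₗ[ℂ] Matrix (Fin d) (Fin d) ℂ)
    (hrep : ∀ X : Matrix (Fin d) (Fin d) ℂ,
      Φ X = ∑ k, ∑ l, ∑ w, ∑ w', c k l w w' • (A l w * X * (A k w')ᴴ))
    (hadj : ∀ P Q : Matrix (Fin d) (Fin d) ℂ,
      (Pᴴ * Φ Q).trace = ((Φadj P)ᴴ * Q).trace)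
    (hadjrep : ∀ X : Matrix (Fin d) (Fin d) ℂ,
      Φadj X = ∑ k, ∑ l, ∑ w, ∑ w', star (c k l w w') • ((A l w)ᴴ * X * A k w'))
    (hherm : ∀ X : Matrix (Fin d) (Fin d) ℂ, Φ Xᴴ = (Φ X)ᴴ)
    (hKMS : ∀ X : Matrix (Fin d) (Fin d) ℂ,
      Φ X = γsq * Φadj (γsq⁻¹ * X * γsq⁻¹) * γsq) :
    ∀ k l w w', c k l w w'
      = star (c k l (neg w) (neg w')) * Complex.exp (-(β * (freq w + freq w')) / 2) :=
  kms_detailed_balance_coefficient_characterization_general β γsq hγsq freq hfreq neg hneg A heig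
    hconjA hindep c Φ Φadj hrep hadjrep hKMS
end

section
/- If a superoperator Φ with fixed point γ satisfies GNS detailed balance (Φ = R_γ ∘ Φ† ∘ R_γ^{-1} with R_γ[X] = Xγ), then it also satisfies KMS detailed balance (Φ = J_γ ∘ Φ† ∘ J_γ^{-1} with J_γ[X] = √γ X √γ), assuming Φ is Hermitian-preserving and γ is a positive definite Gibbs state. -/
/-!
GNS balance `Φ X = Φ†(X γ⁻¹) γ`, conjugated by `ᴴ` (both `Φ` and, through the trace pairing, `Φ†`
preserve Hermiticity), gives the left-handed form `Φ X = γ Φ†(γ⁻¹ X)`; comparing the two shows that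
`Φ†` commutes with the modular operator `Δ X = γ X γ⁻¹`. KMS balance is the same commutation for
`Δ^{1/2} X = √γ X √γ⁻¹`. In an eigenbasis of `√γ` the matrix units are eigenvectors of `Δ^{1/2}`
with positive eigenvalues `λᵢ / λⱼ`, and a map `T` commuting with `S²` for such an `S` commutes with
`S`: the commutator `[T, S]` anticommutes with `S`, so it would send eigenvectors of `S` to
eigenvectors with negative eigenvalues, of which there are none.
-/

open Matrix Unitary
open scoped ComplexOrder

namespace Module.End

variable {K V ι : Type*} [Field K] [AddCommGroup V] [Module K V]

theorem repr_apply_eq_mul_of_apply_basis_eq_smul (b : Basis ι K V) (μ : ι → K)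
    {S : Module.End K V} (hS : ∀ i, S (b i) = μ i • b i) (v : V) (k : ι) :
    b.repr (S v) k = μ k * b.repr v k := by
  classical
  have h : Finsupp.lapply k ∘ₗ b.repr.toLinearMap ∘ₗ S =
      μ k • (Finsupp.lapply k ∘ₗ b.repr.toLinearMap) := by
    refine b.ext fun j => ?_
    simp only [LinearMap.comp_apply, LinearMap.smul_apply, hS, map_smul]
    by_cases hjk : j = k <;> simp [hjk]
  exact LinearMap.congr_fun h v

theorem commute_of_commute_mul_self (b : Basis ι K V) (μ : ι → K) (hμ : ∀ i j, μ i + μ j ≠ 0)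
    {S T : Module.End K V} (hS : ∀ i, S (b i) = μ i • b i) (hT : Commute T (S * S)) :
    Commute T S := by
  set C := T * S - S * T with hC
  have hanti : S * C = -(C * S) := by
    have h : T * S * S = S * S * T := by rw [mul_assoc]; exact hT.eq
    simp only [hC, mul_sub, sub_mul, ← mul_assoc, h]
    abel
  suffices C = 0 from sub_eq_zero.mp this
  refine b.ext fun j => b.repr.injective <| Finsupp.ext fun k => ?_
  have hjk := congrArg (fun v => b.repr v k) (LinearMap.congr_fun hanti (b j))
  simp only [Module.End.mul_apply, LinearMap.neg_apply, hS, map_smul, map_neg, Finsupp.neg_apply,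
    Finsupp.smul_apply, smul_eq_mul, repr_apply_eq_mul_of_apply_basis_eq_smul b μ hS] at hjk
  rw [LinearMap.zero_apply, map_zero, Finsupp.zero_apply]
  exact (mul_eq_zero.mp (by linear_combination hjk)).resolve_left (hμ k j)

end Module.End

namespace Matrix

variable {n : Type*} [Fintype n] [DecidableEq n]

lemma diagonal_mul_single {R : Type*} [CommSemiring R] (d : n → R) (i j : n) (c : R) :
    diagonal d * single i j c = d i • single i j c := by
  ext k l
  simp only [diagonal_mul, smul_apply, single_apply]
  split_ifs <;> simp_all

lemma single_mul_diagonal {R : Type*} [CommSemiring R] (d : n → R) (i j : n) (c : R) :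
    single i j c * diagonal d = d j • single i j c := by
  ext k l
  simp only [mul_diagonal, smul_apply, single_apply]
  split_ifs <;> simp_all [mul_comm]

variable {𝕜 : Type*} [RCLike 𝕜]

namespace IsHermitian

variable {A : Matrix n n 𝕜} (hA : A.IsHermitian)

noncomputable def eigenmatrixBasis : Module.Basis (n × n) 𝕜 (Matrix n n 𝕜) :=
  (stdBasis 𝕜 n n).map (conjStarAlgAut 𝕜 _ hA.eigenvectorUnitary).toAlgEquiv.toLinearEquiv

lemma eigenmatrixBasis_apply (i j : n) :
    hA.eigenmatrixBasis (i, j) = (hA.eigenvectorUnitary : Matrix n n 𝕜) * single i j 1 *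
      star (hA.eigenvectorUnitary : Matrix n n 𝕜) := by
  simp [eigenmatrixBasis, stdBasis_eq_single]

lemma mul_eigenvectorUnitary :
    A * (hA.eigenvectorUnitary : Matrix n n 𝕜) =
      (hA.eigenvectorUnitary : Matrix n n 𝕜) * diagonal (RCLike.ofReal ∘ hA.eigenvalues) := by
  rw [← conjStarAlgAut_star_eigenvectorUnitary, conjStarAlgAut_star_apply]
  simp [← mul_assoc]

lemma star_eigenvectorUnitary_mul :
    star (hA.eigenvectorUnitary : Matrix n n 𝕜) * A =
      diagonal (RCLike.ofReal ∘ hA.eigenvalues) * star (hA.eigenvectorUnitary : Matrix n n 𝕜) := by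
  rw [← conjStarAlgAut_star_eigenvectorUnitary, conjStarAlgAut_star_apply]
  simp [mul_assoc]

lemma mul_eigenmatrixBasis (i j : n) :
    A * hA.eigenmatrixBasis (i, j) = (hA.eigenvalues i : 𝕜) • hA.eigenmatrixBasis (i, j) := by
  rw [eigenmatrixBasis_apply, ← mul_assoc, ← mul_assoc, mul_eigenvectorUnitary,
    mul_assoc _ (diagonal _), diagonal_mul_single, Matrix.mul_smul, Matrix.smul_mul,
    Function.comp_apply]

lemma eigenmatrixBasis_mul (i j : n) :
    hA.eigenmatrixBasis (i, j) * A = (hA.eigenvalues j : 𝕜) • hA.eigenmatrixBasis (i, j) := by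
  rw [eigenmatrixBasis_apply, mul_assoc, star_eigenvectorUnitary_mul, ← mul_assoc,
    mul_assoc _ (single i j 1), single_mul_diagonal, Matrix.mul_smul, Matrix.smul_mul,
    Function.comp_apply]

end IsHermitian

noncomputable def modularOperator (A : Matrix n n 𝕜) : Module.End 𝕜 (Matrix n n 𝕜) :=
  LinearMap.mulLeft 𝕜 A * LinearMap.mulRight 𝕜 A⁻¹

lemma modularOperator_apply (A X : Matrix n n 𝕜) : modularOperator A X = A * X * A⁻¹ :=
  (mul_assoc _ _ _).symm

lemma modularOperator_mul_self (A : Matrix n n 𝕜) :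
    modularOperator A * modularOperator A = modularOperator (A * A) := by
  ext1 X
  simp only [Module.End.mul_apply, modularOperator_apply, mul_inv_rev, mul_assoc]

lemma PosDef.modularOperator_eigenmatrixBasis {A : Matrix n n 𝕜} (hA : A.PosDef) (i j : n) :
    modularOperator A (hA.1.eigenmatrixBasis (i, j)) =
      ((hA.1.eigenvalues i / hA.1.eigenvalues j : ℝ) : 𝕜) • hA.1.eigenmatrixBasis (i, j) := by
  have hj : (hA.1.eigenvalues j : 𝕜) ≠ 0 := RCLike.ofReal_ne_zero.mpr (hA.eigenvalues_pos j).ne'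
  have hinv : hA.1.eigenmatrixBasis (i, j) * A⁻¹ =
      (hA.1.eigenvalues j : 𝕜)⁻¹ • hA.1.eigenmatrixBasis (i, j) := by
    rw [← inv_smul_smul₀ hj (hA.1.eigenmatrixBasis (i, j) * A⁻¹), ← Matrix.smul_mul,
      ← hA.1.eigenmatrixBasis_mul, mul_assoc,
      mul_nonsing_inv _ ((isUnit_iff_isUnit_det A).mp hA.isUnit), mul_one]
  rw [modularOperator_apply, mul_assoc, hinv, Matrix.mul_smul, hA.1.mul_eigenmatrixBasis,
    smul_smul, RCLike.ofReal_div, div_eq_inv_mul]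

lemma PosDef.commute_modularOperator_of_commute_mul_self {A : Matrix n n 𝕜} (hA : A.PosDef)
    {T : Module.End 𝕜 (Matrix n n 𝕜)} (hT : Commute T (modularOperator (A * A))) :
    Commute T (modularOperator A) := by
  rw [← modularOperator_mul_self] at hT
  refine Module.End.commute_of_commute_mul_self hA.1.eigenmatrixBasis
    (fun p => ((hA.1.eigenvalues p.1 / hA.1.eigenvalues p.2 : ℝ) : 𝕜)) (fun p q => ?_)
    (fun p => hA.modularOperator_eigenmatrixBasis p.1 p.2) hT
  have hpos := hA.eigenvalues_pos
  exact_mod_cast (add_pos (div_pos (hpos _) (hpos _)) (div_pos (hpos _) (hpos _))).ne'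

omit [DecidableEq n] in
lemma map_conjTranspose_of_trace_adjoint {Φ Φadj : Matrix n n 𝕜 → Matrix n n 𝕜}
    (hadj : ∀ A B, (Aᴴ * Φ B).trace = ((Φadj A)ᴴ * B).trace)
    (hherm : ∀ X, Φ Xᴴ = (Φ X)ᴴ) (A : Matrix n n 𝕜) : Φadj Aᴴ = (Φadj A)ᴴ := by
  rw [← conjTranspose_conjTranspose (Φadj Aᴴ)]
  congr 1
  refine ext_iff_trace_mul_right.mpr fun B => ?_
  calc ((Φadj Aᴴ)ᴴ * B).trace = (A * Φ B).trace := by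
        rw [← hadj, conjTranspose_conjTranspose]
    _ = star ((Φ B)ᴴ * Aᴴ).trace := by
        rw [← trace_conjTranspose, conjTranspose_mul, conjTranspose_conjTranspose,
          conjTranspose_conjTranspose, trace_mul_comm]
    _ = star ((Φadj A)ᴴ * Bᴴ).trace := by rw [← hherm, trace_mul_comm, hadj]
    _ = (Φadj A * B).trace := by
        rw [← trace_conjTranspose, conjTranspose_mul, conjTranspose_conjTranspose,
          conjTranspose_conjTranspose, trace_mul_comm]

lemma commute_modularOperator_of_gns {γ : Matrix n n 𝕜} (hγ : γ.IsHermitian) (hγu : IsUnit γ.det)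
    {Φ : Matrix n n 𝕜 → Matrix n n 𝕜} {Φadj : Module.End 𝕜 (Matrix n n 𝕜)}
    (hherm : ∀ X, Φ Xᴴ = (Φ X)ᴴ) (hadjherm : ∀ A, Φadj Aᴴ = (Φadj A)ᴴ)
    (hGNS : ∀ X, Φ X = Φadj (X * γ⁻¹) * γ) : Commute Φadj (modularOperator γ) := by
  have hleft : ∀ X, Φ X = γ * Φadj (γ⁻¹ * X) := fun X => by
    rw [← conjTranspose_conjTranspose X, hherm, hGNS, conjTranspose_mul, ← hadjherm,
      conjTranspose_mul, conjTranspose_conjTranspose, conjTranspose_nonsing_inv, hγ.eq]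
  ext1 X
  have h := (hGNS (γ * X)).symm.trans (hleft (γ * X))
  rw [nonsing_inv_mul_cancel_left _ _ hγu] at h
  rw [Module.End.mul_apply, Module.End.mul_apply, modularOperator_apply, modularOperator_apply,
    ← h, mul_nonsing_inv_cancel_right _ _ hγu]

end Matrix

theorem gns_detailed_balance_implies_kms_general {d : ℕ}
    (γ γsq : Matrix (Fin d) (Fin d) ℂ) (hγ : γ.PosDef) (hγsq : γsq.PosDef)
    (hsq : γsq * γsq = γ)
    (Φ Φadj : Matrix (Fin d) (Fin d) ℂ →ₗ[ℂ] Matrix (Fin d) (Fin d) ℂ)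
    (hadj : ∀ A B : Matrix (Fin d) (Fin d) ℂ,
      (Aᴴ * Φ B).trace = ((Φadj A)ᴴ * B).trace)
    (hherm : ∀ X : Matrix (Fin d) (Fin d) ℂ, Φ Xᴴ = (Φ X)ᴴ)
    (hGNS : ∀ X : Matrix (Fin d) (Fin d) ℂ, Φ X = Φadj (X * γ⁻¹) * γ) :
    ∀ X : Matrix (Fin d) (Fin d) ℂ, Φ X = γsq * Φadj (γsq⁻¹ * X * γsq⁻¹) * γsq := by
  have hmod : Commute Φadj (modularOperator γ) :=
    commute_modularOperator_of_gns hγ.1 ((isUnit_iff_isUnit_det γ).mp hγ.isUnit) hherm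
      (map_conjTranspose_of_trace_adjoint hadj hherm) hGNS
  have hsqrt : Commute Φadj (modularOperator γsq) :=
    hγsq.commute_modularOperator_of_commute_mul_self (hsq ▸ hmod)
  have hsq_det : IsUnit γsq.det := (isUnit_iff_isUnit_det γsq).mp hγsq.isUnit
  intro X
  calc Φ X = Φadj (modularOperator γsq (γsq⁻¹ * X * γsq⁻¹)) * γsq * γsq := by
        simp only [hGNS, modularOperator_apply, ← hsq, Matrix.mul_inv_rev, mul_assoc,
          mul_nonsing_inv_cancel_left _ _ hsq_det]
    _ = γsq * Φadj (γsq⁻¹ * X * γsq⁻¹) * γsq := by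
        rw [← Module.End.mul_apply, hsqrt.eq, Module.End.mul_apply, modularOperator_apply,
          nonsing_inv_mul_cancel_right _ _ hsq_det]

/-- **GNS detailed balance implies KMS detailed balance.**
Let `γ` be a positive definite Gibbs state with positive definite square root `γsq`
(`γsq * γsq = γ`).  If the Hermitian-preserving superoperator `Φ`, with fixed point `γ` and
Hilbert–Schmidt adjoint `Φadj`, satisfies GNS detailed balance `Φ = R_γ ∘ Φ† ∘ R_γ⁻¹`
(`R_γ X = X * γ`), then it also satisfies KMS detailed balance
`Φ = J_γ ∘ Φ† ∘ J_γ⁻¹` where `J_γ X = √γ * X * √γ`. -/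
theorem gns_detailed_balance_implies_kms {d : ℕ}
    (γ γsq : Matrix (Fin d) (Fin d) ℂ) (hγ : γ.PosDef) (hγsq : γsq.PosDef)
    (hsq : γsq * γsq = γ)
    (Φ Φadj : Matrix (Fin d) (Fin d) ℂ →ₗ[ℂ] Matrix (Fin d) (Fin d) ℂ)
    (hadj : ∀ A B : Matrix (Fin d) (Fin d) ℂ,
      (Aᴴ * Φ B).trace = ((Φadj A)ᴴ * B).trace)
    (hherm : ∀ X : Matrix (Fin d) (Fin d) ℂ, Φ Xᴴ = (Φ X)ᴴ)
    (hfix : Φ γ = γ)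
    (hGNS : ∀ X : Matrix (Fin d) (Fin d) ℂ, Φ X = Φadj (X * γ⁻¹) * γ) :
    ∀ X : Matrix (Fin d) (Fin d) ℂ, Φ X = γsq * Φadj (γsq⁻¹ * X * γsq⁻¹) * γsq :=
  gns_detailed_balance_implies_kms_general γ γsq hγ hγsq hsq Φ Φadj hadj hherm hGNS
end

section
/- (Exact KMS detailed balance of the constructed rates) Suppose ĝ_{kλ}: ℝ → ℂ satisfies ĝ_{kλ}(ω) = e^{βω/2} ĝ_{λk}(−ω) and conj(ĝ_{kλ}(ω)) = ĝ_{λk}(ω). Define γ̃_{kl}^{ω,ω̃} := e^{-(T(ω−ω̃))²/4} Σ_λ ĝ_{kλ}(−ω̃) ĝ_{λl}(−ω). Then conj(γ̃_{kl}^{-ω,-ω̃}) = e^{β(ω+ω̃)/2} γ̃_{kl}^{ω,ω̃}, i.e. the KMS detailed balance relation γ̃_{kl}^{ω,ω̃} = conj(γ̃_{kl}^{-ω,-ω̃}) e^{-β(ω+ω̃)/2} holds exactly; moreover conj(γ̃_{lk}^{ω,ω̃}) = γ̃_{kl}^{ω̃,ω}. -/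
/-- **Exact KMS detailed balance of the constructed rates (Thm. 10 of the paper).**
Suppose `ĝ_{kλ} : ℝ → ℂ` satisfies the transformed KMS condition
`ĝ_{kλ}(ω) = e^{βω/2} ĝ_{λk}(−ω)` and the Hermiticity `conj(ĝ_{kλ}(ω)) = ĝ_{λk}(ω)`.
Then the rates `γ̃_{kl}^{ω,ω̃} = e^{-(T(ω−ω̃))²/4} Σ_λ ĝ_{kλ}(−ω̃) ĝ_{λl}(−ω)` satisfy exact
KMS detailed balance `conj(γ̃_{kl}^{−ω,−ω̃}) = e^{β(ω+ω̃)/2} γ̃_{kl}^{ω,ω̃}` (equivalently,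
`γ̃_{kl}^{ω,ω̃} = conj(γ̃_{kl}^{−ω,−ω̃}) e^{−β(ω+ω̃)/2}`), together with the Hermiticity
relation `conj(γ̃_{lk}^{ω,ω̃}) = γ̃_{kl}^{ω̃,ω}`. -/
theorem exact_kms_detailed_balance_of_rates {ι : Type*} [Fintype ι]
    (β T : ℝ) (hβ : 0 < β) (hT : 0 < T)
    (g : ι → ι → ℝ → ℂ)
    (hKMS : ∀ (k lam : ι) (ω : ℝ),
      g k lam ω = ((Real.exp (β * ω / 2) : ℝ) : ℂ) * g lam k (-ω))
    (hherm : ∀ (k lam : ι) (ω : ℝ), star (g k lam ω) = g lam k ω)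
    (γ' : ι → ι → ℝ → ℝ → ℂ)
    (hγ' : ∀ (k l : ι) (ω ω' : ℝ),
      γ' k l ω ω' = ((Real.exp (-(T * (ω - ω')) ^ 2 / 4) : ℝ) : ℂ) *
        ∑ lam : ι, g k lam (-ω') * g lam l (-ω)) :
    ∀ (k l : ι) (ω ω' : ℝ),
      (star (γ' k l (-ω) (-ω')) = ((Real.exp (β * (ω + ω') / 2) : ℝ) : ℂ) * γ' k l ω ω')
      ∧ (γ' k l ω ω'
          = star (γ' k l (-ω) (-ω')) * ((Real.exp (-(β * (ω + ω') / 2)) : ℝ) : ℂ))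
      ∧ (star (γ' l k ω ω') = γ' k l ω' ω) := by
  intro k l ω ω'
  have key : star (γ' k l (-ω) (-ω'))
      = ((Real.exp (β * (ω + ω') / 2) : ℝ) : ℂ) * γ' k l ω ω' := by
    rw [hγ', hγ', star_mul', star_sum]
    have hG : (-(T * (-ω - -ω')) ^ 2 : ℝ) = -(T * (ω - ω')) ^ 2 := by ring
    rw [hG, Complex.star_def, Complex.conj_ofReal]
    rw [Finset.mul_sum, Finset.mul_sum, Finset.mul_sum]
    refine Finset.sum_congr rfl fun lam _ => ?_
    simp only [neg_neg, ← Complex.star_def, star_mul', hherm]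
    rw [hKMS lam k ω', hKMS l lam ω]
    have : ((Real.exp (β * (ω + ω') / 2) : ℝ) : ℂ)
        = ((Real.exp (β * ω' / 2) : ℝ) : ℂ) * ((Real.exp (β * ω / 2) : ℝ) : ℂ) := by
      rw [← Complex.ofReal_mul, ← Real.exp_add]
      norm_num
      ring_nf
    rw [this]
    ring
  refine ⟨key, ?_, ?_⟩
  · rw [key, mul_comm, ← mul_assoc, ← Complex.ofReal_mul, ← Real.exp_add]
    simp
  · rw [hγ', hγ', star_mul', star_sum]
    have hG : (-(T * (ω - ω')) ^ 2 : ℝ) = -(T * (ω' - ω)) ^ 2 := by ring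
    rw [hG, Complex.star_def, Complex.conj_ofReal]
    congr 1
    refine Finset.sum_congr rfl fun lam _ => ?_
    simp only [← Complex.star_def, star_mul', hherm]
    rw [mul_comm]
end
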